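/- Let k ∈ L²(ℝ²) be a kernel such that the integral operator Int k maps L²([λ,∞)) into L²([λ,∞)) for every λ ≤ 0. Then k(x,y) = 0 for almost every (x,y) with x < 0 and y > x; equivalently, the essential support of k is contained in the set Q₁ = {(x,y) : x ≥ 0 or y ≤ x}. -/

import Mathlib

/-! Testing the invariance hypothesis with `λ = min c 0` and `f` the indicator of `(c, d)` shows
that for a.e. `x < 0` the row `k (x, ·)`, locally integrable by Fubini, has zero integral over
every interval with rational endpoints `x < c < d`. An integrable function whose integrals over
all rational intervals vanish is zero a.e. (the rational intervals form a π-system generating the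
Borel sets), so the row vanishes a.e. on `(x, ∞)`, and Fubini turns this into the statement on
the plane. -/

open MeasureTheory Complex Filter Topology

noncomputable section

open Set

section RationalIntervals

variable {E : Type*} [NormedAddCommGroup E] [NormedSpace ℝ E] [CompleteSpace E]

theorem ae_eq_zero_of_forall_setIntegral_Ioo_rat_eq_zero {μ : Measure ℝ} {g : ℝ → E}
    (hg : Integrable g μ) (h : ∀ c d : ℚ, ∫ y in Ioo (c : ℝ) d, g y ∂μ = 0) : g =ᵐ[μ] 0 := by
  have h_univ : ∫ y, g y ∂μ = 0 := by
    have h_cover : ⋃ n : ℕ, Ioo (-(n : ℝ)) n = univ := by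
      refine eq_univ_of_forall fun y => mem_iUnion.2 ⟨⌈|y|⌉₊ + 1, ?_⟩
      have : |y| < ⌈|y|⌉₊ + 1 := (Nat.le_ceil _).trans_lt (lt_add_one _)
      push_cast
      exact abs_lt.1 this
    have h_lim := tendsto_setIntegral_of_monotone (μ := μ) (f := g) (fun _ => measurableSet_Ioo)
      (fun m n hmn => Ioo_subset_Ioo (neg_le_neg (Nat.cast_le.2 hmn)) (Nat.cast_le.2 hmn))
      hg.integrableOn
    rw [h_cover, setIntegral_univ] at h_lim
    refine tendsto_nhds_unique h_lim (tendsto_const_nhds.congr fun n => ?_)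
    simpa using (h (-n) n).symm
  suffices ∀ s, MeasurableSet s → ∫ y in s, g y ∂μ = 0 from
    hg.ae_eq_zero_of_forall_setIntegral_eq_zero fun s hs _ => this s hs
  intro s hs
  induction s, hs using MeasurableSpace.induction_on_inter
    (Real.borel_eq_generateFrom_Ioo_rat ▸ BorelSpace.measurable_eq) Real.isPiSystem_Ioo_rat with
  | empty => simp
  | basic t ht =>
    simp only [mem_iUnion, mem_singleton_iff] at ht
    obtain ⟨c, d, -, rfl⟩ := ht
    exact h c d
  | compl t ht iht => simpa [iht, h_univ] using integral_add_compl ht hg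
  | iUnion f hf_disj hf_meas ihf =>
    simp [integral_iUnion hf_meas hf_disj hg.integrableOn, ihf]

theorem ae_eq_zero_on_Ioi_of_forall_setIntegral_Ioo_rat_eq_zero {g : ℝ → E}
    (hg : LocallyIntegrable g) {a : ℝ}
    (h : ∀ c d : ℚ, a < c → ∫ y in Ioo (c : ℝ) d, g y = 0) : ∀ᵐ y, a < y → g y = 0 := by
  have h_bdd : ∀ (q : {q : ℚ // a < q}) (b : ℚ), ∀ᵐ y, y ∈ Ioo (q : ℝ) b → g y = 0 := by
    rintro ⟨q, hq⟩ b
    rw [← ae_restrict_iff' measurableSet_Ioo]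
    refine ae_eq_zero_of_forall_setIntegral_Ioo_rat_eq_zero
      ((hg.integrableOn_isCompact isCompact_Icc).mono_set Ioo_subset_Icc_self) fun c d => ?_
    rw [Measure.restrict_restrict measurableSet_Ioo, Ioo_inter_Ioo, ← Rat.cast_max,
      ← Rat.cast_min]
    exact h _ _ (hq.trans_le (by exact_mod_cast le_max_right c q))
  filter_upwards [ae_all_iff.2 fun q => ae_all_iff.2 (h_bdd q)] with y hy hay
  obtain ⟨q, haq, hqy⟩ := exists_rat_btwn hay
  obtain ⟨b, hyb⟩ := exists_rat_gt y
  exact hy ⟨q, haq⟩ b ⟨hqy, hyb⟩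

end RationalIntervals

namespace MeasureTheory

variable {α β E : Type*} [MeasurableSpace α] [MeasurableSpace β] [NormedAddCommGroup E]
  {μ : Measure α} {ν : Measure β}

theorem MemLp.prod_right_ae [SFinite μ] [SFinite ν] {f : α × β → E} {p : ENNReal}
    (hf : MemLp f p (μ.prod ν)) (hp_zero : p ≠ 0) (hp_top : p ≠ ⊤) :
    ∀ᵐ x ∂μ, MemLp (fun y => f (x, y)) p ν := by
  filter_upwards [hf.1.prodMk_left,
    ((integrable_norm_rpow_iff hf.1 hp_zero hp_top).2 hf).prod_right_ae] with x hx hx_int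
  exact (integrable_norm_rpow_iff hx hp_zero hp_top).1 hx_int

theorem AEStronglyMeasurable.ae_eq_zero_of_ae_ae [SFinite ν] {f : α × β → E}
    (hf : AEStronglyMeasurable f (μ.prod ν))
    (h : ∀ᵐ x ∂μ, ∀ᵐ y ∂ν, f (x, y) = 0) : f =ᵐ[μ.prod ν] 0 := by
  have h_mk : ∀ᵐ p ∂μ.prod ν, hf.mk f p = 0 := by
    rw [Measure.ae_prod_iff_ae_ae
      (hf.stronglyMeasurable_mk.measurableSet_eq_fun stronglyMeasurable_const)]
    filter_upwards [h, Measure.ae_ae_eq_curry_of_prod hf.ae_eq_mk] with x hx hx_mk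
    filter_upwards [hx, hx_mk] with y hy hy_mk
    exact hy_mk.symm.trans hy
  filter_upwards [hf.ae_eq_mk, h_mk] with p hp hp_mk using hp.trans hp_mk

end MeasureTheory

theorem ae_forall_setIntegral_row_Ioo_eq_zero {k : ℝ × ℝ → ℂ}
    (hinv : ∀ lam : ℝ, lam ≤ 0 → ∀ f : ℝ → ℂ, MemLp f 2 (volume : Measure ℝ) →
      (∀ᵐ y : ℝ, y < lam → f y = 0) →
      ∀ᵐ x : ℝ, x < lam → (∫ y : ℝ, k (x, y) * f y) = 0) :
    ∀ᵐ x : ℝ, ∀ c d : ℚ, x < min (c : ℝ) 0 → ∫ y in Ioo (c : ℝ) d, k (x, y) = 0 := by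
  refine ae_all_iff.2 fun c => ae_all_iff.2 fun d => ?_
  have h_supp :
      ∀ᵐ y : ℝ, y < min (c : ℝ) 0 → (Ioo (c : ℝ) d).indicator (fun _ => (1 : ℂ)) y = 0 :=
    .of_forall fun y hy => indicator_of_notMem (fun hy' =>
      (hy.trans_le (min_le_left _ _)).not_gt hy'.1) _
  filter_upwards [hinv _ (min_le_right _ _) _ (memLp_indicator_const 2 measurableSet_Ioo 1
    (Or.inr measure_Ioo_lt_top.ne)) h_supp] with x hx hxc
  rw [← hx hxc, ← integral_indicator measurableSet_Ioo]
  congr 1 with y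
  simp [indicator_apply]

/-- If the integral operator with kernel `k ∈ L²(ℝ²)` maps `L²([λ,∞))` into itself for every
`λ ≤ 0`, then `k(x,y) = 0` for almost every `(x,y)` with `x < 0` and `y > x`. -/
theorem stmt9 (k : ℝ × ℝ → ℂ) (hk : MemLp k 2 (volume : Measure (ℝ × ℝ)))
    (hinv : ∀ lam : ℝ, lam ≤ 0 → ∀ f : ℝ → ℂ, MemLp f 2 (volume : Measure ℝ) →
      (∀ᵐ y : ℝ, y < lam → f y = 0) →
      ∀ᵐ x : ℝ, x < lam → (∫ y : ℝ, k (x, y) * f y) = 0) :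
    ∀ᵐ p : ℝ × ℝ, p.1 < 0 → p.1 < p.2 → k p = 0 := by
  have h_rows : ∀ᵐ x : ℝ, LocallyIntegrable (fun y => k (x, y)) :=
    (hk.prod_right_ae two_ne_zero ENNReal.ofNat_ne_top).mono fun x hx =>
      hx.locallyIntegrable one_le_two
  set S : Set (ℝ × ℝ) := {p | p.1 < 0 ∧ p.1 < p.2}
  have h_sections : ∀ᵐ x : ℝ, ∀ᵐ y : ℝ, S.indicator k (x, y) = 0 := by
    filter_upwards [h_rows, ae_forall_setIntegral_row_Ioo_eq_zero hinv] with x hx_int hx_test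
    by_cases hx0 : x < 0
    · filter_upwards [ae_eq_zero_on_Ioi_of_forall_setIntegral_Ioo_rat_eq_zero hx_int
        fun c d hxc => hx_test c d (lt_min hxc hx0)] with y hy
      by_cases hxy : x < y
      · simp [S, hx0, hxy, hy hxy]
      · simp [S, hxy]
    · exact .of_forall fun y => indicator_of_notMem (fun h => hx0 h.1) _
  have hS : MeasurableSet S :=
    (measurableSet_lt measurable_fst measurable_const).inter
      (measurableSet_lt measurable_fst measurable_snd)
  filter_upwards [(hk.1.indicator hS).ae_eq_zero_of_ae_ae h_sections] with p hp h1 h2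
  rwa [indicator_of_mem (show p ∈ S from ⟨h1, h2⟩)] at hp
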